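/- arXiv:1805.00925 — 5 statements merged into one kernel-verified Lean document; each statement's English description precedes it below -/
import Mathlib

section
/- For every finite family (ℓ_e)_{e∈E} of positive edge lengths (E a finite nonempty set) there exists a constant C_G > 0, depending only on the lengths ℓ_e, such that for every family (f_e)_{e∈E} of absolutely continuous functions f_e : [0,ℓ_e] → ℝ whose derivatives f_e' are square integrable, one has max_{e∈E} sup_{x∈[0,ℓ_e]} |f_e(x)| ≤ C_G ( (Σ_{e∈E} ∫_0^{ℓ_e} |f_e|)^{1/3} (Σ_{e∈E} ∫_0^{ℓ_e} (f_e')²)^{1/3} + Σ_{e∈E} ∫_0^{ℓ_e} |f_e| ); moreover, for every ε > 0, max_{e∈E} sup_{x∈[0,ℓ_e]} |f_e(x)| ≤ ε (Σ_{e∈E} ∫_0^{ℓ_e} (f_e')²)^{1/2} + (C_G + 4 C_G³/(27 ε²)) Σ_{e∈E} ∫_0^{ℓ_e} |f_e|. -/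
open MeasureTheory Set intervalIntegral

-- single edge, two-parameter bound
lemma edge_bound (L : ℝ) (hL : 0 < L) (f f' : ℝ → ℝ)
    (hf : ∀ x ∈ Icc (0:ℝ) L, f x = f 0 + ∫ t in (0:ℝ)..x, f' t)
    (h1 : IntervalIntegrable f' volume 0 L)
    (h2 : IntervalIntegrable (fun t => (f' t) ^ 2) volume 0 L)
    (x : ℝ) (hx : x ∈ Icc (0:ℝ) L) (δ s : ℝ) (hδ : 0 < δ) (hδL : δ ≤ L) (hs : 0 < s) :
    |f x| ≤ (∫ t in (0:ℝ)..L, |f t|) / δ + (∫ t in (0:ℝ)..L, (f' t)^2) / (2*s) + s*δ/2 := by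
  have huIcc : uIcc (0:ℝ) L = Icc 0 L := uIcc_of_le hL.le
  have hFcont : ContinuousOn (fun y => f 0 + ∫ t in (0:ℝ)..y, f' t) (Icc 0 L) := by
    have := continuousOn_primitive_interval' h1 (by rw [huIcc]; exact ⟨le_rfl, hL.le⟩)
    rw [huIcc] at this
    exact continuousOn_const.add this
  have hcont : ContinuousOn f (Icc 0 L) := hFcont.congr hf
  obtain ⟨hx0, hxL⟩ := hx
  set a := min x (L - δ) with ha
  have ha0 : 0 ≤ a := le_min hx0 (by linarith)
  have hab : a ≤ a + δ := by linarith
  have hbL : a + δ ≤ L := by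
    have : a ≤ L - δ := min_le_right _ _
    linarith
  have hax : a ≤ x := min_le_left _ _
  have hxb : x ≤ a + δ := by
    rcases le_total x (L - δ) with h | h
    · have : a = x := min_eq_left h
      linarith
    · have : a = L - δ := min_eq_right h
      linarith
  have hsub : Icc a (a + δ) ⊆ Icc 0 L := Icc_subset_Icc ha0 hbL
  have hsubI : Ioc a (a + δ) ⊆ Ioc 0 L := Ioc_subset_Ioc ha0 hbL
  have hcont' : ContinuousOn f (Icc a (a + δ)) := hcont.mono hsub
  -- min point
  obtain ⟨y, hy, hymin⟩ := (isCompact_Icc (a := a) (b := a + δ)).exists_isMinOn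
    (nonempty_Icc.2 hab) (hcont'.abs)
  have hymin' : ∀ t ∈ Icc a (a+δ), |f y| ≤ |f t| := fun t ht => hymin ht
  -- integrability facts
  have hfint : IntervalIntegrable (fun t => |f t|) volume a (a+δ) := by
    apply ContinuousOn.intervalIntegrable
    rw [uIcc_of_le hab]; exact hcont'.abs
  have hfintL : IntervalIntegrable (fun t => |f t|) volume 0 L := by
    apply ContinuousOn.intervalIntegrable
    rw [huIcc]; exact hcont.abs
  -- step 1 : δ * |f y| ≤ ∫ a..a+δ |f|
  have step1 : δ * |f y| ≤ ∫ t in a..(a+δ), |f t| := by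
    have := integral_mono_on hab (intervalIntegrable_const (μ := volume) (c := |f y|)) hfint
      (fun t ht => hymin' t ht)
    simpa [mul_comm] using this
  have step2 : (∫ t in a..(a+δ), |f t|) ≤ ∫ t in (0:ℝ)..L, |f t| := by
    apply integral_mono_interval ha0 hab hbL
    · filter_upwards with t using abs_nonneg _
    · exact hfintL
  -- step 3 : |f x - f y| ≤ ∫ over [a,b] of |f'|
  have hyIcc : y ∈ Icc 0 L := hsub hy
  have hxy : f x - f y = ∫ t in y..x, f' t := by
    rw [hf x ⟨hx0, hxL⟩, hf y hyIcc]
    have : (∫ t in (0:ℝ)..x, f' t) - ∫ t in (0:ℝ)..y, f' t = ∫ t in y..x, f' t :=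
      integral_interval_sub_left (h1.mono_set (by rw [huIcc, uIcc_of_le hx0]; exact Icc_subset_Icc le_rfl hxL))
        (h1.mono_set (by rw [huIcc, uIcc_of_le hyIcc.1]; exact Icc_subset_Icc le_rfl hyIcc.2))
    rw [← this]; ring
  have h1' : IntervalIntegrable f' volume a (a+δ) :=
    h1.mono_set (by rw [huIcc, uIcc_of_le hab]; exact hsub)
  have h2' : IntervalIntegrable (fun t => (f' t)^2) volume a (a+δ) :=
    h2.mono_set (by rw [huIcc, uIcc_of_le hab]; exact hsub)
  have habs : |∫ t in y..x, f' t| ≤ ∫ t in a..(a+δ), |f' t| := by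
    have hnn : 0 ≤ᵐ[volume.restrict (Ioc a (a+δ))] (fun t => |f' t|) := by
      filter_upwards with t using abs_nonneg _
    have h1abs : IntervalIntegrable (fun t => |f' t|) volume a (a+δ) := h1'.abs
    have hnonneg : 0 ≤ ∫ t in a..(a+δ), |f' t| :=
      integral_nonneg hab (fun t _ => abs_nonneg _)
    rcases le_total y x with h | h
    · calc |∫ t in y..x, f' t| ≤ ∫ t in y..x, |f' t| := abs_integral_le_integral_abs h
        _ ≤ ∫ t in a..(a+δ), |f' t| :=
          integral_mono_interval hy.1 h (hxb) (by filter_upwards with t using abs_nonneg _) h1abs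
    · rw [integral_symm, abs_neg]
      calc |∫ t in x..y, f' t| ≤ ∫ t in x..y, |f' t| := abs_integral_le_integral_abs h
        _ ≤ ∫ t in a..(a+δ), |f' t| :=
          integral_mono_interval hax h hy.2 (by filter_upwards with t using abs_nonneg _) h1abs
  -- step 4 : ∫ |f'| ≤ ∫ (f'^2/(2s) + s/2)
  have step4 : (∫ t in a..(a+δ), |f' t|) ≤ (∫ t in a..(a+δ), (f' t)^2) / (2*s) + s*δ/2 := by
    have hrhsint : IntervalIntegrable (fun t => (f' t)^2 / (2*s) + s/2) volume a (a+δ) := by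
      exact (h2'.div_const _).add (intervalIntegrable_const (μ := volume) (c := s/2))
    have hptwise : ∀ t ∈ Icc a (a+δ), |f' t| ≤ (f' t)^2 / (2*s) + s/2 := by
      intro t _
      rw [div_add' _ _ _ (by positivity), le_div_iff₀ (by positivity)]
      nlinarith [sq_nonneg (|f' t| - s), sq_abs (f' t)]
    calc (∫ t in a..(a+δ), |f' t|) ≤ ∫ t in a..(a+δ), ((f' t)^2 / (2*s) + s/2) :=
          integral_mono_on hab h1'.abs hrhsint hptwise
      _ = (∫ t in a..(a+δ), (f' t)^2) / (2*s) + s*δ/2 := by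
          rw [intervalIntegral.integral_add (h2'.div_const _) (intervalIntegrable_const (μ := volume) (c := s/2)),
            intervalIntegral.integral_div, intervalIntegral.integral_const]
          simp only [smul_eq_mul]
          ring
  have step5 : (∫ t in a..(a+δ), (f' t)^2) ≤ ∫ t in (0:ℝ)..L, (f' t)^2 := by
    apply integral_mono_interval ha0 hab hbL
    · filter_upwards with t using sq_nonneg _
    · exact h2
  -- combine
  have key : |f x| ≤ |f y| + |∫ t in y..x, f' t| := by
    have : f x = f y + (f x - f y) := by ring
    rw [this]
    exact (abs_add_le _ _).trans (by rw [hxy])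
  have hfy : |f y| ≤ (∫ t in (0:ℝ)..L, |f t|) / δ := by
    rw [le_div_iff₀ hδ]
    calc |f y| * δ = δ * |f y| := mul_comm _ _
      _ ≤ ∫ t in a..(a+δ), |f t| := step1
      _ ≤ _ := step2
  have h2nn : (∫ t in a..(a+δ), (f' t)^2) / (2*s) ≤ (∫ t in (0:ℝ)..L, (f' t)^2) / (2*s) := by
    gcongr
  linarith [key, hfy, habs, step4, step5, h2nn]

lemma my_sqrt_add (x y : ℝ) (hx : 0 ≤ x) (hy : 0 ≤ y) :
    Real.sqrt (x + y) ≤ Real.sqrt x + Real.sqrt y := by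
  have h : x + y ≤ (Real.sqrt x + Real.sqrt y)^2 := by
    have hxx := Real.sq_sqrt hx
    have hyy := Real.sq_sqrt hy
    nlinarith [mul_nonneg (Real.sqrt_nonneg x) (Real.sqrt_nonneg y)]
  calc Real.sqrt (x + y) ≤ Real.sqrt ((Real.sqrt x + Real.sqrt y)^2) := Real.sqrt_le_sqrt h
    _ = Real.sqrt x + Real.sqrt y := Real.sqrt_sq (by positivity)

-- Young-type inequality
lemma my_young (C ε a b : ℝ) (hC : 0 < C) (hε : 0 < ε) (ha : 0 ≤ a) (hb : 0 ≤ b) :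
    C * a * b^2 ≤ ε * b^3 + 4 * C^3 / (27 * ε^2) * a^3 := by
  have h27 : (0:ℝ) < 27 * ε^2 := by positivity
  set k := 4 * C^3 / (27 * ε^2) with hk
  have hkk : 27 * ε^2 * k = 4 * C^3 := by rw [hk]; field_simp
  have h1 : 0 ≤ (3*ε*b - 2*C*a)^2 * (3*ε*b + C*a) := by positivity
  have h3 : 27*ε^2*k*a^3 = 4*C^3*a^3 := by rw [hkk]
  have h2 : 27*ε^2 * (C*a*b^2) ≤ 27*ε^2 * (ε*b^3 + k*a^3) := by nlinarith [h1, h3]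
  exact le_of_mul_le_mul_left h2 h27


set_option maxHeartbeats 1000000 in
/-- L¹–L² Gagliardo–Nirenberg interpolation inequality on a finite metric graph,
viewed as a finite family of intervals `[0, ℓ e]`. -/
theorem gagliardo_nirenberg_L1_graph
    (E : Type) [Fintype E] [Nonempty E] (ℓ : E → ℝ) (hℓ : ∀ e, 0 < ℓ e) :
    ∃ C_G : ℝ, 0 < C_G ∧
      ∀ f f' : E → ℝ → ℝ,
        (∀ e, ∀ x ∈ Icc (0:ℝ) (ℓ e), f e x = f e 0 + ∫ t in (0:ℝ)..x, f' e t) →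
        (∀ e, IntervalIntegrable (f' e) volume 0 (ℓ e)) →
        (∀ e, IntervalIntegrable (fun t => (f' e t) ^ 2) volume 0 (ℓ e)) →
        ((∀ e, ∀ x ∈ Icc (0:ℝ) (ℓ e),
          |f e x| ≤ C_G * ((∑ e', ∫ t in (0:ℝ)..(ℓ e'), |f e' t|) ^ ((1:ℝ)/3) *
              (∑ e', ∫ t in (0:ℝ)..(ℓ e'), (f' e' t) ^ 2) ^ ((1:ℝ)/3) +
              ∑ e', ∫ t in (0:ℝ)..(ℓ e'), |f e' t|)) ∧
        (∀ ε : ℝ, 0 < ε → ∀ e, ∀ x ∈ Icc (0:ℝ) (ℓ e),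
          |f e x| ≤ ε * (∑ e', ∫ t in (0:ℝ)..(ℓ e'), (f' e' t) ^ 2) ^ ((1:ℝ)/2) +
              (C_G + 4 * C_G ^ 3 / (27 * ε ^ 2)) *
                ∑ e', ∫ t in (0:ℝ)..(ℓ e'), |f e' t|)) := by
  obtain ⟨m, hm⟩ : ∃ y : ℝ, y = Finset.univ.inf' Finset.univ_nonempty ℓ := ⟨_, rfl⟩
  have hmle : ∀ e, m ≤ ℓ e := fun e => hm ▸ Finset.inf'_le _ (Finset.mem_univ e)
  have hmpos : 0 < m := by
    obtain ⟨e, _, he⟩ := Finset.exists_mem_eq_inf' Finset.univ_nonempty ℓ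
    rw [hm, he]; exact hℓ e
  obtain ⟨C, hC⟩ : ∃ y : ℝ, y = 2 + 1/m := ⟨_, rfl⟩
  have hCpos : 0 < C := by rw [hC]; positivity
  refine ⟨C, hCpos, ?_⟩
  intro f f' hf hint1 hint2
  obtain ⟨A, hA⟩ : ∃ y : ℝ, y = ∑ e', ∫ t in (0:ℝ)..(ℓ e'), |f e' t| := ⟨_, rfl⟩
  obtain ⟨B, hB⟩ : ∃ y : ℝ, y = ∑ e', ∫ t in (0:ℝ)..(ℓ e'), (f' e' t)^2 := ⟨_, rfl⟩
  rw [← hA, ← hB]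
  have hAe : ∀ e, 0 ≤ ∫ t in (0:ℝ)..(ℓ e), |f e t| := fun e =>
    intervalIntegral.integral_nonneg (hℓ e).le (fun t _ => abs_nonneg _)
  have hBe : ∀ e, 0 ≤ ∫ t in (0:ℝ)..(ℓ e), (f' e t)^2 := fun e =>
    intervalIntegral.integral_nonneg (hℓ e).le (fun t _ => sq_nonneg _)
  have hA0 : 0 ≤ A := hA ▸ Finset.sum_nonneg fun e _ => hAe e
  have hB0 : 0 ≤ B := hB ▸ Finset.sum_nonneg fun e _ => hBe e
  have hAle : ∀ e, (∫ t in (0:ℝ)..(ℓ e), |f e t|) ≤ A := fun e =>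
    hA ▸ Finset.single_le_sum (fun e _ => hAe e) (Finset.mem_univ e)
  have hBle : ∀ e, (∫ t in (0:ℝ)..(ℓ e), (f' e t)^2) ≤ B := fun e =>
    hB ▸ Finset.single_le_sum (fun e _ => hBe e) (Finset.mem_univ e)
  have crude : ∀ e, ∀ x ∈ Icc (0:ℝ) (ℓ e), ∀ δ s : ℝ, 0 < δ → δ ≤ m → 0 < s →
      |f e x| ≤ A/δ + B/(2*s) + s*δ/2 := by
    intro e x hx δ s hδ hδm hs
    have h := edge_bound (ℓ e) (hℓ e) (f e) (f' e) (hf e) (hint1 e) (hint2 e) x hx δ s hδ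
      (hδm.trans (hmle e)) hs
    have h1 : (∫ t in (0:ℝ)..(ℓ e), |f e t|)/δ ≤ A/δ := by gcongr; exact hAle e
    have h2 : (∫ t in (0:ℝ)..(ℓ e), (f' e t)^2)/(2*s) ≤ B/(2*s) := by gcongr; exact hBle e
    linarith
  have sqrtb : ∀ e, ∀ x ∈ Icc (0:ℝ) (ℓ e), ∀ δ : ℝ, 0 < δ → δ ≤ m →
      |f e x| ≤ A/δ + Real.sqrt (B*δ) := by
    intro e x hx δ hδ hδm
    refine le_of_forall_pos_le_add ?_
    intro ε hε
    set η := ε^2/δ with hη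
    have hηpos : 0 < η := by positivity
    set c := B + η with hc
    have hcpos : 0 < c := by linarith
    set s := Real.sqrt (c/δ) with hs
    have hspos : 0 < s := Real.sqrt_pos.2 (by positivity)
    have h := crude e x hx δ s hδ hδm hspos
    have e2 : s^2 * δ = c := by
      rw [hs, Real.sq_sqrt (by positivity)]; field_simp
    have e2' : s*δ = c/s := by
      rw [eq_div_iff hspos.ne']; nlinarith [e2]
    have e1 : Real.sqrt (c*δ) = c/s := by
      rw [eq_div_iff hspos.ne', hs, ← Real.sqrt_mul (by positivity)]
      rw [show c*δ*(c/δ) = c^2 by field_simp, Real.sqrt_sq hcpos.le]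
    have hBs : B/(2*s) ≤ c/(2*s) := by gcongr; linarith
    have hsum : B/(2*s) + s*δ/2 ≤ Real.sqrt (c*δ) := by
      rw [e1, e2']
      have : c/(2*s) + (c/s)/2 = c/s := by ring
      linarith [hBs, this]
    have hsplit : Real.sqrt (c*δ) ≤ Real.sqrt (B*δ) + ε := by
      have hexp : c*δ = B*δ + η*δ := by rw [hc]; ring
      have hηδ : η*δ = ε^2 := by rw [hη]; field_simp
      calc Real.sqrt (c*δ) = Real.sqrt (B*δ + η*δ) := by rw [hexp]
        _ ≤ Real.sqrt (B*δ) + Real.sqrt (η*δ) :=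
            my_sqrt_add _ _ (by positivity) (by positivity)
        _ = Real.sqrt (B*δ) + ε := by rw [hηδ, Real.sqrt_sq hε.le]
    linarith
  have part1 : ∀ e, ∀ x ∈ Icc (0:ℝ) (ℓ e),
      |f e x| ≤ C * (A ^ ((1:ℝ)/3) * B ^ ((1:ℝ)/3) + A) := by
    intro e x hx
    rcases eq_or_lt_of_le hA0 with hA' | hApos
    · -- A = 0
      have hfx : |f e x| ≤ 0 := by
        refine le_of_forall_pos_le_add ?_
        intro ε hε
        set δ := min m (ε^2/(B+1)) with hδdef
        have hδpos : 0 < δ := lt_min hmpos (by positivity)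
        have h := sqrtb e x hx δ hδpos (min_le_left _ _)
        rw [← hA', zero_div, zero_add] at h
        have hBδ : B*δ ≤ ε^2 := by
          have h1 : δ ≤ ε^2/(B+1) := min_le_right _ _
          have h2 : B*δ ≤ B*(ε^2/(B+1)) := by gcongr
          have h3 : B*(ε^2/(B+1)) ≤ ε^2 := by
            rw [mul_div_assoc']
            rw [div_le_iff₀ (by linarith)]
            nlinarith [sq_nonneg ε]
          linarith
        have : Real.sqrt (B*δ) ≤ ε := by
          calc Real.sqrt (B*δ) ≤ Real.sqrt (ε^2) := Real.sqrt_le_sqrt hBδ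
            _ = ε := Real.sqrt_sq hε.le
        linarith
      have hrhs : 0 ≤ C * (A ^ ((1:ℝ)/3) * B ^ ((1:ℝ)/3) + A) := by
        have := Real.rpow_nonneg hA0 ((1:ℝ)/3)
        have := Real.rpow_nonneg hB0 ((1:ℝ)/3)
        positivity
      linarith
    · rcases eq_or_lt_of_le hB0 with hB' | hBpos
      · -- B = 0
        have h := sqrtb e x hx m hmpos le_rfl
        rw [← hB', zero_mul, Real.sqrt_zero, add_zero] at h
        rw [← hB', Real.zero_rpow (by norm_num), mul_zero, zero_add]
        have h2 : A/m ≤ C*A := by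
          rw [div_eq_mul_one_div, mul_comm]
          apply mul_le_mul_of_nonneg_right _ hA0
          rw [hC]
          have : 0 < 1/m := by positivity
          linarith
        exact h.trans h2
      · -- A > 0, B > 0
        obtain ⟨a3, ha3⟩ : ∃ y : ℝ, y = A ^ ((1:ℝ)/3) := ⟨_, rfl⟩
        obtain ⟨b3, hb3⟩ : ∃ y : ℝ, y = B ^ ((1:ℝ)/3) := ⟨_, rfl⟩
        rw [← ha3, ← hb3]
        have ha3pos : 0 < a3 := ha3 ▸ Real.rpow_pos_of_pos hApos _
        have hb3pos : 0 < b3 := hb3 ▸ Real.rpow_pos_of_pos hBpos _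
        have ha3c : a3^3 = A := by
          rw [ha3, ← Real.rpow_natCast (A ^ ((1:ℝ)/3)) 3, ← Real.rpow_mul hA0]
          norm_num
        have hb3c : b3^3 = B := by
          rw [hb3, ← Real.rpow_natCast (B ^ ((1:ℝ)/3)) 3, ← Real.rpow_mul hB0]
          norm_num
        obtain ⟨T, hT⟩ : ∃ y : ℝ, y = a3^2 / b3 := ⟨_, rfl⟩
        have hTpos : 0 < T := by rw [hT]; positivity
        have hBT : B * T = (a3*b3)^2 := by
          rw [hT, ← hb3c]; field_simp
        rcases le_total T m with hTm | hmT
        · have h := sqrtb e x hx T hTpos hTm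
          have e1 : A / T = a3 * b3 := by
            rw [hT, div_div_eq_mul_div, ← ha3c]; field_simp
          have e2 : Real.sqrt (B * T) = a3 * b3 := by
            rw [hBT, Real.sqrt_sq (by positivity)]
          rw [e1, e2] at h
          have hab : 0 < a3*b3 := mul_pos ha3pos hb3pos
          have h1m : 0 < 1/m := by positivity
          have hfin : a3*b3 + a3*b3 ≤ C*(a3*b3 + A) := by
            rw [hC]
            nlinarith [mul_pos h1m hab, mul_pos h1m hApos, hApos, hab]
          linarith
        · have h := sqrtb e x hx m hmpos le_rfl
          have e2 : Real.sqrt (B * m) ≤ a3 * b3 := by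
            have hle : B * m ≤ (a3*b3)^2 := by
              rw [← hBT]; gcongr
            calc Real.sqrt (B*m) ≤ Real.sqrt ((a3*b3)^2) := Real.sqrt_le_sqrt hle
              _ = a3*b3 := Real.sqrt_sq (by positivity)
          have e3 : A/m = (1/m)*A := by ring
          have hab : 0 < a3*b3 := mul_pos ha3pos hb3pos
          have h1m : 0 < 1/m := by positivity
          have hfin : A/m + a3*b3 ≤ C*(a3*b3 + A) := by
            rw [e3, hC]
            nlinarith [mul_pos h1m hab, mul_pos h1m hApos, hApos, hab]
          linarith
  constructor
  · exact part1
  · intro ε hε e x hx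
    have h := part1 e x hx
    obtain ⟨a, ha⟩ : ∃ y : ℝ, y = A ^ ((1:ℝ)/3) := ⟨_, rfl⟩
    obtain ⟨b, hbdef⟩ : ∃ y : ℝ, y = B ^ ((1:ℝ)/6) := ⟨_, rfl⟩
    rw [← ha] at h
    have ha0 : 0 ≤ a := ha ▸ Real.rpow_nonneg hA0 _
    have hb0 : 0 ≤ b := hbdef ▸ Real.rpow_nonneg hB0 _
    have hac : a^3 = A := by
      rw [ha, ← Real.rpow_natCast (A ^ ((1:ℝ)/3)) 3, ← Real.rpow_mul hA0]
      norm_num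
    have hb2 : b^2 = B ^ ((1:ℝ)/3) := by
      rw [hbdef, ← Real.rpow_natCast (B ^ ((1:ℝ)/6)) 2, ← Real.rpow_mul hB0]
      norm_num
    have hb3 : b^3 = B ^ ((1:ℝ)/2) := by
      rw [hbdef, ← Real.rpow_natCast (B ^ ((1:ℝ)/6)) 3, ← Real.rpow_mul hB0]
      norm_num
    have hy := my_young C ε a b hCpos hε ha0 hb0
    rw [hac, hb3] at hy
    -- h : |f e x| ≤ C * (a * B^{1/3} + A)
    rw [← hb2] at h
    have hexpand : (C + 4 * C ^ 3 / (27 * ε ^ 2)) * A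
        = C*A + 4 * C ^ 3 / (27 * ε ^ 2) * A := by ring
    rw [hexpand]
    nlinarith [h, hy]
end

section
/- Let (u,c) be a regular solution of the chemotaxis system on the metric graph on [0,T] such that u_e(t,x) ≥ 0 and c_e(t,x) ≥ 0 for all edges e, all t ∈ [0,T], and all x ∈ [0,ℓ_e]. Then for all t ∈ [0,T], Σ_e ∫_0^{ℓ_e} c_e(t,x) dx ≤ Σ_e ∫_0^{ℓ_e} c_e(0,x) dx + t · (max_e δ_e) · Σ_e ∫_0^{ℓ_e} u_e(0,x) dx. -/
open Set MeasureTheory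

/-- A regular solution of the chemotaxis system on a finite directed metric graph
with vertex type `V`, edge type `E`, source/target maps `src`/`tgt`, edge lengths `ℓ`,
edgewise-constant coefficients `α β γ δ χ`, on the time interval `[0, T]`.
Each edge `e` is identified with the interval `[0, ℓ e]`; `u e t x` and `c e t x` are the
population density and chemoattractant concentration, and `ut, ux, uxx, ct, cx, cxx` are
their partial derivatives. -/
structure ChemotaxisRegularSolution (V E : Type) [Fintype V] [Fintype E] [DecidableEq V]
    (src tgt : E → V) (ℓ : E → ℝ) (α β γ δ χ : E → ℝ) (T : ℝ) where
  u : E → ℝ → ℝ → ℝ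
  c : E → ℝ → ℝ → ℝ
  ut : E → ℝ → ℝ → ℝ
  ux : E → ℝ → ℝ → ℝ
  uxx : E → ℝ → ℝ → ℝ
  ct : E → ℝ → ℝ → ℝ
  cx : E → ℝ → ℝ → ℝ
  cxx : E → ℝ → ℝ → ℝ
  hut : ∀ e, ∀ t ∈ Icc (0:ℝ) T, ∀ x ∈ Icc (0:ℝ) (ℓ e),
    HasDerivWithinAt (fun s => u e s x) (ut e t x) (Icc (0:ℝ) T) t
  hux : ∀ e, ∀ t ∈ Icc (0:ℝ) T, ∀ x ∈ Icc (0:ℝ) (ℓ e),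
    HasDerivWithinAt (fun y => u e t y) (ux e t x) (Icc (0:ℝ) (ℓ e)) x
  huxx : ∀ e, ∀ t ∈ Icc (0:ℝ) T, ∀ x ∈ Icc (0:ℝ) (ℓ e),
    HasDerivWithinAt (fun y => ux e t y) (uxx e t x) (Icc (0:ℝ) (ℓ e)) x
  hct : ∀ e, ∀ t ∈ Icc (0:ℝ) T, ∀ x ∈ Icc (0:ℝ) (ℓ e),
    HasDerivWithinAt (fun s => c e s x) (ct e t x) (Icc (0:ℝ) T) t
  hcx : ∀ e, ∀ t ∈ Icc (0:ℝ) T, ∀ x ∈ Icc (0:ℝ) (ℓ e),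
    HasDerivWithinAt (fun y => c e t y) (cx e t x) (Icc (0:ℝ) (ℓ e)) x
  hcxx : ∀ e, ∀ t ∈ Icc (0:ℝ) T, ∀ x ∈ Icc (0:ℝ) (ℓ e),
    HasDerivWithinAt (fun y => cx e t y) (cxx e t x) (Icc (0:ℝ) (ℓ e)) x
  hu_cont : ∀ e, ContinuousOn (fun p : ℝ × ℝ => u e p.1 p.2) (Icc (0:ℝ) T ×ˢ Icc (0:ℝ) (ℓ e))
  hut_cont : ∀ e, ContinuousOn (fun p : ℝ × ℝ => ut e p.1 p.2) (Icc (0:ℝ) T ×ˢ Icc (0:ℝ) (ℓ e))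
  hux_cont : ∀ e, ContinuousOn (fun p : ℝ × ℝ => ux e p.1 p.2) (Icc (0:ℝ) T ×ˢ Icc (0:ℝ) (ℓ e))
  huxx_cont : ∀ e, ContinuousOn (fun p : ℝ × ℝ => uxx e p.1 p.2) (Icc (0:ℝ) T ×ˢ Icc (0:ℝ) (ℓ e))
  hc_cont : ∀ e, ContinuousOn (fun p : ℝ × ℝ => c e p.1 p.2) (Icc (0:ℝ) T ×ˢ Icc (0:ℝ) (ℓ e))
  hct_cont : ∀ e, ContinuousOn (fun p : ℝ × ℝ => ct e p.1 p.2) (Icc (0:ℝ) T ×ˢ Icc (0:ℝ) (ℓ e))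
  hcx_cont : ∀ e, ContinuousOn (fun p : ℝ × ℝ => cx e p.1 p.2) (Icc (0:ℝ) T ×ˢ Icc (0:ℝ) (ℓ e))
  hcxx_cont : ∀ e, ContinuousOn (fun p : ℝ × ℝ => cxx e p.1 p.2) (Icc (0:ℝ) T ×ˢ Icc (0:ℝ) (ℓ e))
  pde_u : ∀ e, ∀ t ∈ Ioc (0:ℝ) T, ∀ x ∈ Icc (0:ℝ) (ℓ e),
    ut e t x = α e * uxx e t x - χ e * (ux e t x * cx e t x + u e t x * cxx e t x)
  pde_c : ∀ e, ∀ t ∈ Ioc (0:ℝ) T, ∀ x ∈ Icc (0:ℝ) (ℓ e),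
    ct e t x = β e * cxx e t x - γ e * c e t x + δ e * u e t x
  vertex_cont_u : ∀ v : V,
    2 ≤ (Finset.univ.filter fun e => src e = v ∨ tgt e = v).card →
    ∀ t ∈ Ioc (0:ℝ) T, ∀ e e' : E, ∀ x x' : ℝ,
      ((x = 0 ∧ src e = v) ∨ (x = ℓ e ∧ tgt e = v)) →
      ((x' = 0 ∧ src e' = v) ∨ (x' = ℓ e' ∧ tgt e' = v)) →
      u e t x = u e' t x'
  vertex_cont_c : ∀ v : V,
    2 ≤ (Finset.univ.filter fun e => src e = v ∨ tgt e = v).card →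
    ∀ t ∈ Ioc (0:ℝ) T, ∀ e e' : E, ∀ x x' : ℝ,
      ((x = 0 ∧ src e = v) ∨ (x = ℓ e ∧ tgt e = v)) →
      ((x' = 0 ∧ src e' = v) ∨ (x' = ℓ e' ∧ tgt e' = v)) →
      c e t x = c e' t x'
  flux_u : ∀ v : V, ∀ t ∈ Ioc (0:ℝ) T,
    ∑ e, ((if tgt e = v then α e * ux e t (ℓ e) - χ e * u e t (ℓ e) * cx e t (ℓ e) else 0)
        - (if src e = v then α e * ux e t 0 - χ e * u e t 0 * cx e t 0 else 0)) = 0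
  flux_c : ∀ v : V, ∀ t ∈ Ioc (0:ℝ) T,
    ∑ e, ((if tgt e = v then β e * cx e t (ℓ e) else 0)
        - (if src e = v then β e * cx e t 0 else 0)) = 0


lemma sliceX {F : ℝ × ℝ → ℝ} {A B : Set ℝ} (h : ContinuousOn F (A ×ˢ B)) {t : ℝ}
    (ht : t ∈ A) : ContinuousOn (fun x => F (t, x)) B :=
  h.comp (Continuous.continuousOn (by continuity)) (fun x hx => ⟨ht, hx⟩)

lemma sliceT {F : ℝ × ℝ → ℝ} {A B : Set ℝ} (h : ContinuousOn F (A ×ˢ B)) {x : ℝ}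
    (hx : x ∈ B) : ContinuousOn (fun t => F (t, x)) A :=
  h.comp (Continuous.continuousOn (by continuity)) (fun t ht => ⟨ht, hx⟩)

lemma ftc_edge {f f' : ℝ → ℝ} {l : ℝ} (hl : 0 ≤ l)
    (hf : ContinuousOn f (Icc 0 l))
    (hd : ∀ x ∈ Ioo (0:ℝ) l, HasDerivAt f (f' x) x)
    (hf' : ContinuousOn f' (Icc 0 l)) :
    ∫ x in (0:ℝ)..l, f' x = f l - f 0 := by
  apply intervalIntegral.integral_eq_sub_of_hasDeriv_right_of_le hl hf
    (fun x hx => (hd x hx).hasDerivWithinAt)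
  exact (hf'.mono (by rw [uIcc_of_le hl])).intervalIntegrable

lemma flux_sum {V E : Type} [Fintype V] [Fintype E] [DecidableEq V] (src tgt : E → V)
    (A B : E → ℝ)
    (h : ∀ v, ∑ e, ((if tgt e = v then A e else 0) - (if src e = v then B e else 0)) = 0) :
    ∑ e, (A e - B e) = 0 := by
  calc ∑ e, (A e - B e)
      = ∑ e, ∑ v, ((if tgt e = v then A e else 0) - (if src e = v then B e else 0)) := by
        apply Finset.sum_congr rfl; intro e _
        rw [Finset.sum_sub_distrib]
        simp
    _ = ∑ v, ∑ e, ((if tgt e = v then A e else 0) - (if src e = v then B e else 0)) :=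
        Finset.sum_comm
    _ = 0 := by simp [h]

lemma hasDerivAt_param_integral {g g' : ℝ → ℝ → ℝ} {T l : ℝ} (hl : 0 < l)
    (hgc : ContinuousOn (fun p : ℝ × ℝ => g p.1 p.2) (Icc 0 T ×ˢ Icc 0 l))
    (hg'c : ContinuousOn (fun p : ℝ × ℝ => g' p.1 p.2) (Icc 0 T ×ˢ Icc 0 l))
    (hder : ∀ t ∈ Icc (0:ℝ) T, ∀ x ∈ Icc (0:ℝ) l,
      HasDerivWithinAt (fun s => g s x) (g' t x) (Icc 0 T) t)
    {t₀ : ℝ} (ht₀ : t₀ ∈ Ioo (0:ℝ) T) :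
    HasDerivAt (fun t => ∫ x in (0:ℝ)..l, g t x) (∫ x in (0:ℝ)..l, g' t₀ x) t₀ := by
  obtain ⟨C, hC⟩ := (isCompact_Icc.prod isCompact_Icc).exists_bound_of_continuousOn hg'c
  have ht₀Icc : t₀ ∈ Icc (0:ℝ) T := Ioo_subset_Icc_self ht₀
  set ε := min t₀ (T - t₀) with hεdef
  have hε : 0 < ε := lt_min ht₀.1 (sub_pos.2 ht₀.2)
  have hball : Metric.ball t₀ ε ⊆ Ioo 0 T := by
    intro t ht
    rw [Metric.mem_ball, Real.dist_eq, abs_lt] at ht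
    have h1 := min_le_left t₀ (T - t₀)
    have h2 := min_le_right t₀ (T - t₀)
    constructor <;> nlinarith [ht.1, ht.2]
  have hIsub : Set.uIoc (0:ℝ) l ⊆ Icc 0 l := by
    rw [uIoc_of_le hl.le]; exact Ioc_subset_Icc_self
  have hmem : ∀ᵐ x ∂(volume.restrict (Set.uIoc (0:ℝ) l)), x ∈ Set.uIoc (0:ℝ) l :=
    ae_restrict_mem measurableSet_uIoc
  have key := intervalIntegral.hasDerivAt_integral_of_dominated_loc_of_deriv_le
    (F := g) (F' := g') (x₀ := t₀) (a := 0) (b := l) (μ := volume)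
    (bound := fun _ => C) (Metric.ball_mem_nhds t₀ hε)
    (Filter.eventually_of_mem (Metric.ball_mem_nhds t₀ hε) (fun t ht => by
      exact (((sliceX hgc (Ioo_subset_Icc_self (hball ht))).mono hIsub).aestronglyMeasurable
        measurableSet_uIoc)))
    (((sliceX hgc ht₀Icc).mono (by rw [uIcc_of_le hl.le])).intervalIntegrable)
    (((sliceX hg'c ht₀Icc).mono hIsub).aestronglyMeasurable measurableSet_uIoc)
    (Filter.Eventually.of_forall (fun x hx t ht =>
      hC (t, x) ⟨Ioo_subset_Icc_self (hball ht), hIsub hx⟩))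
    intervalIntegrable_const
    (Filter.Eventually.of_forall (fun x hx t ht => by
      have htI := hball ht
      exact (hder t (Ioo_subset_Icc_self htI) x (hIsub hx)).hasDerivAt
        (Icc_mem_nhds htI.1 htI.2)))
  exact key.2

lemma continuousOn_param_integral {g : ℝ → ℝ → ℝ} {T l : ℝ} (hl : 0 < l)
    (hgc : ContinuousOn (fun p : ℝ × ℝ => g p.1 p.2) (Icc 0 T ×ˢ Icc 0 l)) :
    ContinuousOn (fun t => ∫ x in (0:ℝ)..l, g t x) (Icc 0 T) := by
  obtain ⟨C, hC⟩ := (isCompact_Icc.prod isCompact_Icc).exists_bound_of_continuousOn hgc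
  have heq : (fun t => ∫ x in (0:ℝ)..l, g t x)
      = fun t => ∫ x in Ioc (0:ℝ) l, g t x := by
    funext t
    rw [intervalIntegral.integral_of_le hl.le]
  rw [heq]
  apply MeasureTheory.continuousOn_of_dominated (bound := fun _ => C)
  · intro t ht
    exact ((sliceX hgc ht).mono Ioc_subset_Icc_self).aestronglyMeasurable measurableSet_Ioc
  · intro t ht
    filter_upwards [ae_restrict_mem measurableSet_Ioc] with x hx
    exact hC (t, x) ⟨ht, Ioc_subset_Icc_self hx⟩
  · exact integrableOn_const measure_Ioc_lt_top.ne
  · filter_upwards [ae_restrict_mem measurableSet_Ioc] with x hx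
    exact sliceT hgc (Ioc_subset_Icc_self hx)

/-- Linear-in-time bound for the total amount of chemoattractant for nonnegative
regular solutions of the chemotaxis system on a metric graph. -/
theorem chemoattractant_L1_bound_of_regular_solution
    (V E : Type) [Fintype V] [Fintype E] [Nonempty E] [DecidableEq V]
    (src tgt : E → V) (ℓ : E → ℝ) (hℓ : ∀ e, 0 < ℓ e)
    (α β γ δ χ : E → ℝ)
    (hα : ∀ e, 0 < α e) (hβ : ∀ e, 0 < β e)
    (hγ : ∀ e, 0 ≤ γ e) (hδ : ∀ e, 0 ≤ δ e)
    (T : ℝ) (hT : 0 < T)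
    (S : ChemotaxisRegularSolution V E src tgt ℓ α β γ δ χ T)
    (hu_nonneg : ∀ e, ∀ t ∈ Icc (0:ℝ) T, ∀ x ∈ Icc (0:ℝ) (ℓ e), 0 ≤ S.u e t x)
    (hc_nonneg : ∀ e, ∀ t ∈ Icc (0:ℝ) T, ∀ x ∈ Icc (0:ℝ) (ℓ e), 0 ≤ S.c e t x) :
    ∀ t ∈ Icc (0:ℝ) T,
      ∑ e, ∫ x in (0:ℝ)..(ℓ e), S.c e t x ≤
        (∑ e, ∫ x in (0:ℝ)..(ℓ e), S.c e 0 x) +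
          t * (Finset.univ.sup' Finset.univ_nonempty δ) *
            ∑ e, ∫ x in (0:ℝ)..(ℓ e), S.u e 0 x := by
  have h0T : (0:ℝ) ∈ Icc (0:ℝ) T := left_mem_Icc.2 hT.le
  set K := Finset.univ.sup' Finset.univ_nonempty δ with hKdef
  set M : ℝ → ℝ := fun s => ∑ e, ∫ x in (0:ℝ)..(ℓ e), S.u e s x with hMdef
  set G : ℝ → ℝ := fun s => ∑ e, ∫ x in (0:ℝ)..(ℓ e), S.c e s x with hGdef
  have hMcont : ContinuousOn M (Icc 0 T) :=
    continuousOn_finset_sum _ fun e _ => continuousOn_param_integral (hℓ e) (S.hu_cont e)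
  have hGcont : ContinuousOn G (Icc 0 T) :=
    continuousOn_finset_sum _ fun e _ => continuousOn_param_integral (hℓ e) (S.hc_cont e)
  -- mass is constant
  have hMderiv : ∀ t ∈ Ioo (0:ℝ) T, HasDerivAt M 0 t := by
    intro t htI
    have htIcc : t ∈ Icc (0:ℝ) T := Ioo_subset_Icc_self htI
    have htIoc : t ∈ Ioc (0:ℝ) T := ⟨htI.1, htI.2.le⟩
    have h1 : HasDerivAt M (∑ e, ∫ x in (0:ℝ)..(ℓ e), S.ut e t x) t :=
      HasDerivAt.fun_sum fun e _ =>
        hasDerivAt_param_integral (hℓ e) (S.hu_cont e) (S.hut_cont e) (S.hut e) htI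
    have hper : ∀ e, ∫ x in (0:ℝ)..(ℓ e), S.ut e t x =
        (α e * S.ux e t (ℓ e) - χ e * S.u e t (ℓ e) * S.cx e t (ℓ e)) -
        (α e * S.ux e t 0 - χ e * S.u e t 0 * S.cx e t 0) := by
      intro e
      apply ftc_edge (f := fun y => α e * S.ux e t y - χ e * S.u e t y * S.cx e t y) (hℓ e).le
      · exact (continuousOn_const.mul (sliceX (S.hux_cont e) htIcc)).sub
          ((continuousOn_const.mul (sliceX (S.hu_cont e) htIcc)).mul
            (sliceX (S.hcx_cont e) htIcc))
      · intro x hx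
        have hxIcc : x ∈ Icc (0:ℝ) (ℓ e) := Ioo_subset_Icc_self hx
        have hnx : Icc (0:ℝ) (ℓ e) ∈ nhds x := Icc_mem_nhds hx.1 hx.2
        have hdu : HasDerivAt (fun y => S.u e t y) (S.ux e t x) x :=
          (S.hux e t htIcc x hxIcc).hasDerivAt hnx
        have hdux : HasDerivAt (fun y => S.ux e t y) (S.uxx e t x) x :=
          (S.huxx e t htIcc x hxIcc).hasDerivAt hnx
        have hdcx : HasDerivAt (fun y => S.cx e t y) (S.cxx e t x) x :=
          (S.hcxx e t htIcc x hxIcc).hasDerivAt hnx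
        have hD : HasDerivAt
            (fun y => α e * S.ux e t y - χ e * S.u e t y * S.cx e t y)
            (α e * S.uxx e t x -
              ((χ e * S.ux e t x) * S.cx e t x + (χ e * S.u e t x) * S.cxx e t x)) x :=
          (hdux.const_mul (α e)).sub ((hdu.const_mul (χ e)).mul hdcx)
        have heq : α e * S.uxx e t x -
            ((χ e * S.ux e t x) * S.cx e t x + (χ e * S.u e t x) * S.cxx e t x)
            = S.ut e t x := by
          rw [S.pde_u e t htIoc x hxIcc]; ring
        rwa [heq] at hD
      · exact sliceX (S.hut_cont e) htIcc
    have h2 : ∑ e, ∫ x in (0:ℝ)..(ℓ e), S.ut e t x = 0 := by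
      rw [Finset.sum_congr rfl fun e _ => hper e]
      exact flux_sum src tgt _ _ (fun v => S.flux_u v t htIoc)
    rwa [h2] at h1
  have hMdiff : DifferentiableOn ℝ M (interior (Icc (0:ℝ) T)) := by
    rw [interior_Icc]
    exact fun s hs => ((hMderiv s hs).differentiableAt).differentiableWithinAt
  have hMd0 : ∀ s ∈ interior (Icc (0:ℝ) T), deriv M s = 0 := by
    rw [interior_Icc]; exact fun s hs => (hMderiv s hs).deriv
  have hMconst : ∀ t ∈ Icc (0:ℝ) T, M t = M 0 := by
    intro t ht
    have hmono := monotoneOn_of_deriv_nonneg (convex_Icc 0 T) hMcont hMdiff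
      (fun s hs => (hMd0 s hs).ge)
    have hanti := antitoneOn_of_deriv_nonpos (convex_Icc 0 T) hMcont hMdiff
      (fun s hs => (hMd0 s hs).le)
    exact le_antisymm (hanti h0T ht ht.1) (hmono h0T ht ht.1)
  -- derivative of G and its bound
  have hGderiv : ∀ t ∈ Ioo (0:ℝ) T,
      HasDerivAt G (∑ e, ∫ x in (0:ℝ)..(ℓ e), S.ct e t x) t :=
    fun t htI => HasDerivAt.fun_sum fun e _ =>
      hasDerivAt_param_integral (hℓ e) (S.hc_cont e) (S.hct_cont e) (S.hct e) htI
  have hGbound : ∀ t ∈ Ioo (0:ℝ) T,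
      ∑ e, ∫ x in (0:ℝ)..(ℓ e), S.ct e t x ≤ K * M 0 := by
    intro t htI
    have htIcc : t ∈ Icc (0:ℝ) T := Ioo_subset_Icc_self htI
    have htIoc : t ∈ Ioc (0:ℝ) T := ⟨htI.1, htI.2.le⟩
    have hper : ∀ e, ∫ x in (0:ℝ)..(ℓ e), S.ct e t x =
        ((β e * S.cx e t (ℓ e)) - (β e * S.cx e t 0)) +
        (- (γ e * ∫ x in (0:ℝ)..(ℓ e), S.c e t x)
         + δ e * ∫ x in (0:ℝ)..(ℓ e), S.u e t x) := by
      intro e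
      have hcont_c := sliceX (S.hc_cont e) htIcc
      have hcont_u := sliceX (S.hu_cont e) htIcc
      have hcont_cxx := sliceX (S.hcxx_cont e) htIcc
      have hInt : ∀ {f : ℝ → ℝ}, ContinuousOn f (Icc 0 (ℓ e)) →
          IntervalIntegrable f volume 0 (ℓ e) :=
        fun h => (h.mono (by rw [uIcc_of_le (hℓ e).le])).intervalIntegrable
      have h1 : ∫ x in (0:ℝ)..(ℓ e), S.ct e t x
          = ∫ x in (0:ℝ)..(ℓ e),
              (β e * S.cxx e t x - γ e * S.c e t x + δ e * S.u e t x) := by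
        apply intervalIntegral.integral_congr
        intro x hx
        rw [uIcc_of_le (hℓ e).le] at hx
        exact S.pde_c e t htIoc x hx
      rw [h1,
        intervalIntegral.integral_add
          (((hInt hcont_cxx).const_mul _).sub ((hInt hcont_c).const_mul _))
          ((hInt hcont_u).const_mul _),
        intervalIntegral.integral_sub
          ((hInt hcont_cxx).const_mul _) ((hInt hcont_c).const_mul _),
        intervalIntegral.integral_const_mul, intervalIntegral.integral_const_mul,
        intervalIntegral.integral_const_mul]
      have hftc : ∫ x in (0:ℝ)..(ℓ e), S.cxx e t x = S.cx e t (ℓ e) - S.cx e t 0 :=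
        ftc_edge (hℓ e).le (sliceX (S.hcx_cont e) htIcc)
          (fun x hx => (S.hcxx e t htIcc x (Ioo_subset_Icc_self hx)).hasDerivAt
            (Icc_mem_nhds hx.1 hx.2))
          hcont_cxx
      rw [hftc]; ring
    calc ∑ e, ∫ x in (0:ℝ)..(ℓ e), S.ct e t x
        = ∑ e, (((β e * S.cx e t (ℓ e)) - (β e * S.cx e t 0)) +
            (- (γ e * ∫ x in (0:ℝ)..(ℓ e), S.c e t x)
             + δ e * ∫ x in (0:ℝ)..(ℓ e), S.u e t x)) :=
          Finset.sum_congr rfl fun e _ => hper e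
      _ = (∑ e, ((β e * S.cx e t (ℓ e)) - (β e * S.cx e t 0))) +
          ∑ e, (- (γ e * ∫ x in (0:ℝ)..(ℓ e), S.c e t x)
             + δ e * ∫ x in (0:ℝ)..(ℓ e), S.u e t x) := Finset.sum_add_distrib
      _ = ∑ e, (- (γ e * ∫ x in (0:ℝ)..(ℓ e), S.c e t x)
             + δ e * ∫ x in (0:ℝ)..(ℓ e), S.u e t x) := by
          rw [flux_sum src tgt _ _ (fun v => S.flux_c v t htIoc), zero_add]
      _ ≤ ∑ e, K * ∫ x in (0:ℝ)..(ℓ e), S.u e t x := by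
          apply Finset.sum_le_sum
          intro e _
          have hcI : 0 ≤ ∫ x in (0:ℝ)..(ℓ e), S.c e t x :=
            intervalIntegral.integral_nonneg (hℓ e).le (fun x hx => hc_nonneg e t htIcc x hx)
          have huI : 0 ≤ ∫ x in (0:ℝ)..(ℓ e), S.u e t x :=
            intervalIntegral.integral_nonneg (hℓ e).le (fun x hx => hu_nonneg e t htIcc x hx)
          have h1 : - (γ e * ∫ x in (0:ℝ)..(ℓ e), S.c e t x) ≤ 0 := by
            simp only [neg_nonpos]
            exact mul_nonneg (hγ e) hcI
          have h2 : δ e * (∫ x in (0:ℝ)..(ℓ e), S.u e t x) ≤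
              K * ∫ x in (0:ℝ)..(ℓ e), S.u e t x :=
            mul_le_mul_of_nonneg_right (Finset.le_sup' δ (Finset.mem_univ e)) huI
          linarith
      _ = K * M t := by rw [Finset.mul_sum]
      _ = K * M 0 := by rw [hMconst t htIcc]
  -- monotonicity of the comparison function
  have key : ∀ t ∈ Icc (0:ℝ) T, G t ≤ G 0 + t * (K * M 0) := by
    have hψcont : ContinuousOn (fun s => G 0 + s * (K * M 0) - G s) (Icc 0 T) :=
      (continuousOn_const.add (continuousOn_id.mul continuousOn_const)).sub hGcont
    have hψd : ∀ s ∈ Ioo (0:ℝ) T,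
        HasDerivAt (fun s => G 0 + s * (K * M 0) - G s)
          (1 * (K * M 0) - ∑ e, ∫ x in (0:ℝ)..(ℓ e), S.ct e s x) s :=
      fun s hs => (((hasDerivAt_id s).mul_const (K * M 0)).const_add (G 0)).sub (hGderiv s hs)
    have hψmono := monotoneOn_of_deriv_nonneg (convex_Icc 0 T) hψcont
      (by rw [interior_Icc]
          exact fun s hs => ((hψd s hs).differentiableAt).differentiableWithinAt)
      (by rw [interior_Icc]
          intro s hs
          rw [(hψd s hs).deriv]
          have := hGbound s hs
          linarith)
    intro t ht
    have h := hψmono h0T ht ht.1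
    simp only [zero_mul, add_zero] at h
    linarith
  intro t ht
  have h := key t ht
  calc ∑ e, ∫ x in (0:ℝ)..(ℓ e), S.c e t x = G t := rfl
    _ ≤ G 0 + t * (K * M 0) := h
    _ = (∑ e, ∫ x in (0:ℝ)..(ℓ e), S.c e 0 x) + t * K * ∑ e, ∫ x in (0:ℝ)..(ℓ e), S.u e 0 x := by
        rw [hGdef, hMdef]; ring
end

section
/- Let τ > 0, let M be a real N×N diagonal matrix with M_{ii} > 0 for all i, and let B be a real N×N matrix with B_{ij} ≤ 0 for all i ≠ j and Σ_{i=1}^N B_{ij} ≥ 0 for every j (nonnegative column sums). Then S = τ^{-1} M + B is invertible and all entries of S^{-1} are nonnegative; consequently, for every y ∈ ℝ^N with y_i ≥ 0 for all i, the unique solution x of S x = τ^{-1} M y satisfies x_i ≥ 0 for all i. If moreover Σ_{i=1}^N B_{ij} = 0 for every j, then this solution additionally satisfies the conservation property Σ_{i=1}^N M_{ii} x_i = Σ_{i=1}^N M_{ii} y_i. -/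
open Matrix Finset

/-- A matrix with nonpositive off-diagonal entries and strictly positive row sums
maps vectors with a nonnegative image to nonnegative vectors. -/
lemma rowdom_mulVec_nonneg {N : ℕ} (A : Matrix (Fin N) (Fin N) ℝ)
    (hoff : ∀ i j, i ≠ j → A i j ≤ 0) (hrow : ∀ i, 0 < ∑ j, A i j)
    (x : Fin N → ℝ) (hb : ∀ i, 0 ≤ A.mulVec x i) : ∀ i, 0 ≤ x i := by
  intro i
  obtain ⟨k, -, hk⟩ := Finset.exists_min_image Finset.univ x ⟨i, Finset.mem_univ i⟩
  have hk' : ∀ j, x k ≤ x j := fun j => hk j (Finset.mem_univ j)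
  by_contra h
  push_neg at h
  have hxk : x k < 0 := lt_of_le_of_lt (hk' i) h
  have hmv : A.mulVec x k = ∑ j, A k j * x j := rfl
  have hle : A.mulVec x k ≤ (∑ j, A k j) * x k := by
    rw [hmv, Finset.sum_mul]
    apply Finset.sum_le_sum
    intro j _
    by_cases hj : j = k
    · subst hj; exact le_refl _
    · exact mul_le_mul_of_nonpos_left (hk' j) (hoff k j (Ne.symm hj))
  have hneg : (∑ j, A k j) * x k < 0 := mul_neg_of_pos_of_neg (hrow k) hxk
  exact absurd (hb k) (not_le.mpr (lt_of_le_of_lt hle hneg))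

/-- Algebraic content of one step of the implicit upwind finite element scheme:
for a positive diagonal (lumped mass) matrix `M` and a matrix `B` with nonpositive
off-diagonal entries and nonnegative column sums, the matrix `S = τ⁻¹ M + B` is
invertible with entrywise nonnegative inverse, solutions of `S x = τ⁻¹ M y` with
`y ≥ 0` satisfy `x ≥ 0`, and if the column sums of `B` vanish, mass is conserved:
`Σ_i M_{ii} x_i = Σ_i M_{ii} y_i`. -/
theorem implicit_step_positivity_and_conservation
    (N : ℕ) (hN : 0 < N) (τ : ℝ) (hτ : 0 < τ)
    (M B : Matrix (Fin N) (Fin N) ℝ)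
    (hMdiag : ∀ i j, i ≠ j → M i j = 0)
    (hMpos : ∀ i, 0 < M i i)
    (hBoff : ∀ i j, i ≠ j → B i j ≤ 0)
    (hBcol : ∀ j, 0 ≤ ∑ i, B i j) :
    IsUnit (τ⁻¹ • M + B) ∧
    (∀ i j, 0 ≤ (τ⁻¹ • M + B)⁻¹ i j) ∧
    (∀ y : Fin N → ℝ, (∀ i, 0 ≤ y i) →
      ∀ x : Fin N → ℝ, (τ⁻¹ • M + B).mulVec x = (τ⁻¹ • M).mulVec y →
        ∀ i, 0 ≤ x i) ∧
    ((∀ j, ∑ i, B i j = 0) →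
      ∀ y x : Fin N → ℝ, (τ⁻¹ • M + B).mulVec x = (τ⁻¹ • M).mulVec y →
        ∑ i, M i i * x i = ∑ i, M i i * y i) := by
  set S : Matrix (Fin N) (Fin N) ℝ := τ⁻¹ • M + B with hS
  set A : Matrix (Fin N) (Fin N) ℝ := Sᵀ with hA
  have hτinv : 0 < τ⁻¹ := inv_pos.mpr hτ
  -- column sums of S
  have hcolS : ∀ j, ∑ i, S i j = τ⁻¹ * M j j + ∑ i, B i j := by
    intro j
    have h1 : ∑ i, S i j = ∑ i, (τ⁻¹ * M i j + B i j) := by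
      apply Finset.sum_congr rfl; intro i _; simp [hS]
    rw [h1, Finset.sum_add_distrib]
    congr 1
    rw [Finset.sum_eq_single j]
    · intro b _ hb; rw [hMdiag b j hb]; ring
    · intro hj; exact absurd (Finset.mem_univ j) hj
  -- properties of A = Sᵀ
  have hAoff : ∀ i j, i ≠ j → A i j ≤ 0 := by
    intro i j hij
    have h1 : A i j = τ⁻¹ * M j i + B j i := by simp [hA, hS, Matrix.transpose_apply]
    rw [h1, hMdiag j i hij.symm]
    simpa using hBoff j i hij.symm
  have hArow : ∀ i, 0 < ∑ j, A i j := by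
    intro i
    have h1 : ∑ j, A i j = ∑ j, S j i := rfl
    rw [h1, hcolS i]
    have := hBcol i
    nlinarith [hMpos i]
  have hApos := rowdom_mulVec_nonneg A hAoff hArow
  -- invertibility
  have hinj : Function.Injective A.mulVec := by
    intro u v huv
    have h0 : A.mulVec (u - v) = 0 := by rw [Matrix.mulVec_sub, huv, sub_self]
    have h1 : ∀ i, 0 ≤ (u - v) i := hApos (u - v) (by simp [h0])
    have h2 : ∀ i, 0 ≤ (v - u) i := by
      have h0' : A.mulVec (v - u) = 0 := by rw [Matrix.mulVec_sub, huv, sub_self]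
      exact hApos (v - u) (by simp [h0'])
    funext i
    have := h1 i; have := h2 i
    simp only [Pi.sub_apply, sub_nonneg] at *
    linarith
  have hAunit : IsUnit A := Matrix.mulVec_injective_iff_isUnit.mp hinj
  have hSunit : IsUnit S := (Matrix.isUnit_transpose S).mp hAunit
  have hAdet : IsUnit A.det := (Matrix.isUnit_iff_isUnit_det A).mp hAunit
  have hSdet : IsUnit S.det := (Matrix.isUnit_iff_isUnit_det S).mp hSunit
  -- entrywise nonnegative inverse of A
  have hAinv : ∀ i j, 0 ≤ A⁻¹ i j := by
    intro i j
    refine hApos (fun k => A⁻¹ k j) ?_ i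
    intro l
    have h1 : A.mulVec (fun k => A⁻¹ k j) l = (A * A⁻¹) l j := by
      simp [Matrix.mulVec, Matrix.mul_apply, dotProduct]
    rw [h1, Matrix.mul_nonsing_inv A hAdet]
    by_cases h : l = j <;> simp [Matrix.one_apply, h]
  have hSinv : ∀ i j, 0 ≤ S⁻¹ i j := by
    intro i j
    have h1 : S⁻¹ i j = A⁻¹ j i := by
      rw [hA, ← Matrix.transpose_nonsing_inv, Matrix.transpose_apply]
    rw [h1]; exact hAinv j i
  -- rhs nonneg
  have hrhs : ∀ (y : Fin N → ℝ), (∀ i, 0 ≤ y i) → ∀ j, 0 ≤ (τ⁻¹ • M).mulVec y j := by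
    intro y hy j
    have h1 : (τ⁻¹ • M).mulVec y j = ∑ k, τ⁻¹ * M j k * y k := by
      simp [Matrix.mulVec, dotProduct, mul_assoc]
    rw [h1]
    apply Finset.sum_nonneg
    intro k _
    by_cases hk : k = j
    · subst hk; exact mul_nonneg (mul_nonneg (le_of_lt hτinv) (le_of_lt (hMpos k))) (hy k)
    · rw [hMdiag j k (Ne.symm hk)]; simp
  refine ⟨hSunit, hSinv, ?_, ?_⟩
  · -- positivity preservation
    intro y hy x hx i
    have hxeq : x = S⁻¹.mulVec (S.mulVec x) := by
      rw [Matrix.mulVec_mulVec, Matrix.nonsing_inv_mul S hSdet, Matrix.one_mulVec]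
    have : x i = ∑ j, S⁻¹ i j * ((τ⁻¹ • M).mulVec y) j := by
      conv_lhs => rw [hxeq, hx]
      rfl
    rw [this]
    exact Finset.sum_nonneg fun j _ => mul_nonneg (hSinv i j) (hrhs y hy j)
  · -- conservation
    intro hB0 y x hx
    have hsum : ∑ i, S.mulVec x i = ∑ i, (τ⁻¹ • M).mulVec y i := by rw [hx]
    have hLHS : ∑ i, S.mulVec x i = τ⁻¹ * ∑ j, M j j * x j := by
      calc ∑ i, S.mulVec x i = ∑ i, ∑ j, S i j * x j := rfl
        _ = ∑ j, (∑ i, S i j) * x j := by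
            rw [Finset.sum_comm]
            exact Finset.sum_congr rfl fun j _ => (Finset.sum_mul _ _ _).symm
        _ = ∑ j, τ⁻¹ * (M j j * x j) := by
            apply Finset.sum_congr rfl
            intro j _
            rw [hcolS j, hB0 j]; ring
        _ = τ⁻¹ * ∑ j, M j j * x j := (Finset.mul_sum _ _ _).symm
    have hRHS : ∑ i, (τ⁻¹ • M).mulVec y i = τ⁻¹ * ∑ j, M j j * y j := by
      calc ∑ i, (τ⁻¹ • M).mulVec y i = ∑ i, ∑ j, τ⁻¹ * M i j * y j := by
            apply Finset.sum_congr rfl; intro i _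
            simp [Matrix.mulVec, dotProduct, mul_assoc]
        _ = ∑ j, ∑ i, τ⁻¹ * M i j * y j := Finset.sum_comm
        _ = ∑ j, τ⁻¹ * (M j j * y j) := by
            apply Finset.sum_congr rfl
            intro j _
            rw [Finset.sum_eq_single j]
            · ring
            · intro b _ hb; rw [hMdiag b j hb]; ring
            · intro hj; exact absurd (Finset.mem_univ j) hj
        _ = τ⁻¹ * ∑ j, M j j * y j := (Finset.mul_sum _ _ _).symm
    rw [hLHS, hRHS] at hsum
    exact mul_left_cancel₀ (ne_of_gt hτinv) hsum
end

section
/- Let 0 = x₀ < x₁ < … < x_N = ℓ be a partition of [0,ℓ] with h_k = x_k − x_{k−1} and h = max_k h_k, and let u, v : [0,ℓ] → ℝ be continuous and affine on each subinterval [x_{k−1},x_k]. Then | Σ_{k=1}^N (h_k/2)(u(x_{k−1})v(x_{k−1}) + u(x_k)v(x_k)) − ∫_0^ℓ u(x)v(x) dx | ≤ (h²/6) (∫_0^ℓ (u')²)^{1/2} (∫_0^ℓ (v')²)^{1/2}, where u' and v' denote the (piecewise constant, almost-everywhere) derivatives. -/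
open Set MeasureTheory

lemma affine_integral (a b c d p q : ℝ) :
    ∫ y in p..q, (a*y+b)*(c*y+d) =
      (q - p)/2 * ((a*p+b)*(c*p+d) + (a*q+b)*(c*q+d)) - a*c*(q-p)^3/6 := by
  have hF : ∀ y : ℝ, HasDerivAt (fun y : ℝ => a*c*y^3/3 + (a*d+b*c)*y^2/2 + b*d*y)
      ((a*y+b)*(c*y+d)) y := by
    intro y
    have h1 : HasDerivAt (fun y : ℝ => a*c*y^3/3 + (a*d+b*c)*y^2/2 + b*d*y)
        ((a*c)*(3*y^2)/3 + ((a*d+b*c)*(2*y^1))/2 + b*d*1) y := by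
      exact ((((hasDerivAt_pow 3 y).const_mul (a*c)).div_const 3).add
        (((hasDerivAt_pow 2 y).const_mul (a*d+b*c)).div_const 2)).add
        ((hasDerivAt_id y).const_mul (b*d))
    convert h1 using 1
    ring
  have hcont : Continuous fun y : ℝ => (a*y+b)*(c*y+d) := by fun_prop
  rw [intervalIntegral.integral_eq_sub_of_hasDerivAt (fun y _ => hF y)
    (hcont.intervalIntegrable p q)]
  ring

/-- Mass-lumping error estimate: for continuous piecewise affine functions `u, v` on a
one-dimensional mesh with maximal mesh width `h`, the difference between the lumped
(elementwise trapezoidal) inner product and the exact `L²` inner product is bounded by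
`(h²/6) ‖u'‖_{L²} ‖v'‖_{L²}`, where `Du, Dv` are the (a.e.) derivatives. -/
theorem mass_lumping_error_estimate
    (N : ℕ) (hN : 0 < N) (ℓ : ℝ) (x : Fin (N + 1) → ℝ)
    (hx : StrictMono x) (hx0 : x 0 = 0) (hxN : x (Fin.last N) = ℓ)
    (u v : ℝ → ℝ)
    (hu_affine : ∀ k : Fin N, ∃ a b : ℝ,
      ∀ y ∈ Icc (x k.castSucc) (x k.succ), u y = a * y + b)
    (hv_affine : ∀ k : Fin N, ∃ a b : ℝ,
      ∀ y ∈ Icc (x k.castSucc) (x k.succ), v y = a * y + b)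
    (Du Dv : ℝ → ℝ)
    (hDu : ∀ k : Fin N, ∀ y ∈ Ioo (x k.castSucc) (x k.succ), HasDerivAt u (Du y) y)
    (hDv : ∀ k : Fin N, ∀ y ∈ Ioo (x k.castSucc) (x k.succ), HasDerivAt v (Dv y) y)
    (h : ℝ)
    (hh : h = Finset.univ.sup' ⟨⟨0, hN⟩, Finset.mem_univ _⟩
      (fun k : Fin N => x k.succ - x k.castSucc)) :
    |(∑ k : Fin N, (x k.succ - x k.castSucc) / 2 *
        (u (x k.castSucc) * v (x k.castSucc) + u (x k.succ) * v (x k.succ))) -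
      ∫ y in (0:ℝ)..ℓ, u y * v y| ≤
      (h ^ 2 / 6) * Real.sqrt (∫ y in (0:ℝ)..ℓ, (Du y) ^ 2) *
        Real.sqrt (∫ y in (0:ℝ)..ℓ, (Dv y) ^ 2) := by
  choose au bu hu using hu_affine
  choose av bv hv using hv_affine
  have hlt : ∀ k : Fin N, x k.castSucc < x k.succ := fun k => hx (Fin.castSucc_lt_succ (i := k))
  have hkpos : ∀ k : Fin N, 0 < x k.succ - x k.castSucc := fun k => sub_pos.mpr (hlt k)
  have hkle : ∀ k : Fin N, x k.succ - x k.castSucc ≤ h := by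
    intro k
    rw [hh]
    exact Finset.le_sup' (fun k : Fin N => x k.succ - x k.castSucc) (Finset.mem_univ k)
  have hpos : 0 < h := lt_of_lt_of_le (hkpos ⟨0, hN⟩) (hkle _)
  -- the values of Du, Dv on the open subintervals
  have hDuval : ∀ k : Fin N, ∀ y ∈ Ioo (x k.castSucc) (x k.succ), Du y = au k := by
    intro k y hy
    have h1 : HasDerivAt (fun y : ℝ => au k * y + bu k) (au k) y := by
      simpa using ((hasDerivAt_id y).const_mul (au k)).add_const (bu k)
    have h2 : HasDerivAt u (au k) y := by
      apply h1.congr_of_eventuallyEq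
      filter_upwards [Ioo_mem_nhds hy.1 hy.2] with z hz
      exact hu k z (Ioo_subset_Icc_self hz)
    exact (hDu k y hy).unique h2
  have hDvval : ∀ k : Fin N, ∀ y ∈ Ioo (x k.castSucc) (x k.succ), Dv y = av k := by
    intro k y hy
    have h1 : HasDerivAt (fun y : ℝ => av k * y + bv k) (av k) y := by
      simpa using ((hasDerivAt_id y).const_mul (av k)).add_const (bv k)
    have h2 : HasDerivAt v (av k) y := by
      apply h1.congr_of_eventuallyEq
      filter_upwards [Ioo_mem_nhds hy.1 hy.2] with z hz
      exact hv k z (Ioo_subset_Icc_self hz)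
    exact (hDv k y hy).unique h2
  -- splitting the integral over [0, ℓ] into the subintervals
  set a : ℕ → ℝ := fun i => x ⟨min i N, Nat.lt_succ_of_le (min_le_right _ _)⟩ with ha
  have ha1 : ∀ k : Fin N, a (k : ℕ) = x k.castSucc := by
    intro k
    apply congrArg x
    apply Fin.ext
    simp [ha, Nat.min_eq_left k.isLt.le]
  have ha2 : ∀ k : Fin N, a ((k : ℕ) + 1) = x k.succ := by
    intro k
    apply congrArg x
    apply Fin.ext
    simp [ha, Nat.min_eq_left k.isLt]
  have ha0 : a 0 = x 0 := by
    apply congrArg x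
    apply Fin.ext
    simp [ha]
  have haN : a N = x (Fin.last N) := by
    apply congrArg x
    apply Fin.ext
    simp [ha, Fin.last]
  have key : ∀ f : ℝ → ℝ,
      (∀ k : Fin N, IntervalIntegrable f volume (x k.castSucc) (x k.succ)) →
      ∫ y in (0:ℝ)..ℓ, f y = ∑ k : Fin N, ∫ y in (x k.castSucc)..(x k.succ), f y := by
    intro f hint
    have hint' : ∀ i < N, IntervalIntegrable f volume (a i) (a (i+1)) := by
      intro i hi
      have := hint ⟨i, hi⟩
      rwa [← ha1 ⟨i, hi⟩, ← ha2 ⟨i, hi⟩] at this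
    have hsum := intervalIntegral.sum_integral_adjacent_intervals (μ := volume) hint'
    have : ∑ k : Fin N, ∫ y in (x k.castSucc)..(x k.succ), f y
        = ∑ i ∈ Finset.range N, ∫ y in (a i)..(a (i+1)), f y := by
      rw [← Fin.sum_univ_eq_sum_range (fun i => ∫ y in (a i)..(a (i+1)), f y) N]
      exact Finset.sum_congr rfl fun k _ => by rw [ha1 k, ha2 k]
    rw [this, hsum, ha0, haN, hx0, hxN]
  -- integrability of u * v on each subinterval
  have int_uv : ∀ k : Fin N,
      IntervalIntegrable (fun y => u y * v y) volume (x k.castSucc) (x k.succ) := by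
    intro k
    have hcont : Continuous fun y : ℝ => (au k * y + bu k) * (av k * y + bv k) := by fun_prop
    apply (hcont.intervalIntegrable _ _).congr
    intro z hz
    rw [uIoc_of_le (hlt k).le] at hz
    have hz' : z ∈ Icc (x k.castSucc) (x k.succ) := Ioc_subset_Icc_self hz
    simp [hu k z hz', hv k z hz']
  -- the per-element error formula
  have elem : ∀ k : Fin N,
      (x k.succ - x k.castSucc) / 2 *
        (u (x k.castSucc) * v (x k.castSucc) + u (x k.succ) * v (x k.succ)) -
      (∫ y in (x k.castSucc)..(x k.succ), u y * v y)
      = au k * av k * (x k.succ - x k.castSucc)^3 / 6 := by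
    intro k
    have e1 : EqOn (fun y => u y * v y)
        (fun y => (au k * y + bu k) * (av k * y + bv k))
        (uIcc (x k.castSucc) (x k.succ)) := by
      rw [uIcc_of_le (hlt k).le]
      intro y hy
      simp only
      rw [hu k y hy, hv k y hy]
    rw [intervalIntegral.integral_congr e1, affine_integral,
      hu k _ ⟨le_rfl, (hlt k).le⟩, hu k _ ⟨(hlt k).le, le_rfl⟩,
      hv k _ ⟨le_rfl, (hlt k).le⟩, hv k _ ⟨(hlt k).le, le_rfl⟩]
    ring
  -- the total error
  have hDelta : (∑ k : Fin N, (x k.succ - x k.castSucc) / 2 *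
        (u (x k.castSucc) * v (x k.castSucc) + u (x k.succ) * v (x k.succ))) -
      (∫ y in (0:ℝ)..ℓ, u y * v y)
      = ∑ k : Fin N, au k * av k * (x k.succ - x k.castSucc)^3 / 6 := by
    rw [key _ int_uv, ← Finset.sum_sub_distrib]
    exact Finset.sum_congr rfl fun k _ => elem k
  -- the L² norms of the derivatives
  have Dint : ∀ (D : ℝ → ℝ) (c : Fin N → ℝ),
      (∀ k : Fin N, ∀ y ∈ Ioo (x k.castSucc) (x k.succ), D y = c k) →
      ∫ y in (0:ℝ)..ℓ, (D y)^2 = ∑ k : Fin N, (c k)^2 * (x k.succ - x k.castSucc) := by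
    intro D c hc
    have hint : ∀ k : Fin N,
        IntervalIntegrable (fun y => (D y)^2) volume (x k.castSucc) (x k.succ) := by
      intro k
      rw [intervalIntegrable_iff_integrableOn_Ioc_of_le (hlt k).le,
        integrableOn_Ioc_iff_integrableOn_Ioo]
      apply (integrableOn_const (C := (c k)^2) measure_Ioo_lt_top.ne).congr_fun
        (g := fun y => (D y)^2) ?_ measurableSet_Ioo
      intro y hy
      simp [hc k y hy]
    rw [key _ hint]
    apply Finset.sum_congr rfl
    intro k _
    rw [intervalIntegral.integral_of_le (hlt k).le, integral_Ioc_eq_integral_Ioo]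
    rw [setIntegral_congr_fun measurableSet_Ioo (g := fun _ => (c k)^2)
      (fun y hy => by simp [hc k y hy])]
    rw [setIntegral_const, Real.volume_real_Ioo_of_le (hlt k).le]
    simp [mul_comm]
  rw [hDelta, Dint Du au hDuval, Dint Dv av hDvval]
  -- the Cauchy–Schwarz step
  have cs : ∑ k : Fin N, |au k| * |av k| * (x k.succ - x k.castSucc)
      ≤ Real.sqrt (∑ k : Fin N, (au k)^2 * (x k.succ - x k.castSucc)) *
        Real.sqrt (∑ k : Fin N, (av k)^2 * (x k.succ - x k.castSucc)) := by
    set f : Fin N → ℝ := fun k => |au k| * Real.sqrt (x k.succ - x k.castSucc) with hf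
    set g : Fin N → ℝ := fun k => |av k| * Real.sqrt (x k.succ - x k.castSucc) with hg
    have h1 : ∑ k : Fin N, |au k| * |av k| * (x k.succ - x k.castSucc)
        = ∑ k : Fin N, f k * g k := by
      apply Finset.sum_congr rfl
      intro k _
      rw [hf, hg]
      simp only
      rw [mul_mul_mul_comm, Real.mul_self_sqrt (hkpos k).le, mul_assoc]
    have h2 : ∑ k : Fin N, f k ^ 2 = ∑ k : Fin N, (au k)^2 * (x k.succ - x k.castSucc) := by
      apply Finset.sum_congr rfl
      intro k _
      rw [hf]
      simp only
      rw [mul_pow, sq_abs, Real.sq_sqrt (hkpos k).le]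
    have h3 : ∑ k : Fin N, g k ^ 2 = ∑ k : Fin N, (av k)^2 * (x k.succ - x k.castSucc) := by
      apply Finset.sum_congr rfl
      intro k _
      rw [hg]
      simp only
      rw [mul_pow, sq_abs, Real.sq_sqrt (hkpos k).le]
    have hfg := Finset.sum_mul_sq_le_sq_mul_sq Finset.univ f g
    have hnn : 0 ≤ ∑ k : Fin N, f k * g k := by
      apply Finset.sum_nonneg
      intro k _
      exact mul_nonneg (mul_nonneg (abs_nonneg _) (Real.sqrt_nonneg _))
        (mul_nonneg (abs_nonneg _) (Real.sqrt_nonneg _))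
    rw [h1, ← h2, ← h3, ← Real.sqrt_mul (Finset.sum_nonneg fun k _ => sq_nonneg _)]
    calc ∑ k : Fin N, f k * g k = Real.sqrt ((∑ k : Fin N, f k * g k)^2) :=
          (Real.sqrt_sq hnn).symm
      _ ≤ Real.sqrt ((∑ k : Fin N, f k ^ 2) * ∑ k : Fin N, g k ^ 2) :=
          Real.sqrt_le_sqrt hfg
  calc |∑ k : Fin N, au k * av k * (x k.succ - x k.castSucc)^3 / 6|
      ≤ ∑ k : Fin N, |au k * av k * (x k.succ - x k.castSucc)^3 / 6| :=
        Finset.abs_sum_le_sum_abs _ _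
    _ ≤ ∑ k : Fin N, h^2 / 6 * (|au k| * |av k| * (x k.succ - x k.castSucc)) := by
        apply Finset.sum_le_sum
        intro k _
        rw [abs_div, abs_mul, abs_mul, abs_pow, abs_of_pos (hkpos k),
          (by norm_num : |(6:ℝ)| = 6)]
        have : |au k| * |av k| * (x k.succ - x k.castSucc)^3
            ≤ |au k| * |av k| * (h^2 * (x k.succ - x k.castSucc)) := by
          apply mul_le_mul_of_nonneg_left _ (mul_nonneg (abs_nonneg _) (abs_nonneg _))
          calc (x k.succ - x k.castSucc)^3
              = (x k.succ - x k.castSucc)^2 * (x k.succ - x k.castSucc) := by ring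
            _ ≤ h^2 * (x k.succ - x k.castSucc) := by
                apply mul_le_mul_of_nonneg_right _ (hkpos k).le
                exact pow_le_pow_left₀ (hkpos k).le (hkle k) 2
        calc |au k| * |av k| * (x k.succ - x k.castSucc)^3 / 6
            ≤ |au k| * |av k| * (h^2 * (x k.succ - x k.castSucc)) / 6 := by linarith
          _ = h^2 / 6 * (|au k| * |av k| * (x k.succ - x k.castSucc)) := by ring
    _ = h^2 / 6 * ∑ k : Fin N, |au k| * |av k| * (x k.succ - x k.castSucc) := by
        rw [Finset.mul_sum]
    _ ≤ h^2 / 6 * (Real.sqrt (∑ k : Fin N, (au k)^2 * (x k.succ - x k.castSucc)) *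
        Real.sqrt (∑ k : Fin N, (av k)^2 * (x k.succ - x k.castSucc))) := by
        apply mul_le_mul_of_nonneg_left cs
        positivity
    _ = h ^ 2 / 6 * Real.sqrt (∑ k : Fin N, (au k)^2 * (x k.succ - x k.castSucc)) *
        Real.sqrt (∑ k : Fin N, (av k)^2 * (x k.succ - x k.castSucc)) := by ring
end

section
/- Let 0 = x₀ < x₁ < … < x_N = ℓ be a partition of [0,ℓ] with h_k = x_k − x_{k−1} and h_min = min_k h_k, and let v : [0,ℓ] → ℝ be continuous and affine on each subinterval [x_{k−1},x_k]. Then the inverse inequality ∫_0^ℓ (v'(x))² dx ≤ (12 / h_min²) ∫_0^ℓ v(x)² dx holds, where v' denotes the (piecewise constant, almost-everywhere) derivative. -/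
open Set
open MeasureTheory intervalIntegral

lemma affine_sq_integral (a b p q : ℝ) :
    (∫ y in p..q, (a*y+b)^2) =
      (a^2/3*q^3 + a*b*q^2 + b^2*q) - (a^2/3*p^3 + a*b*p^2 + b^2*p) := by
  have hF : ∀ y : ℝ, HasDerivAt (fun y => a^2/3*y^3 + a*b*y^2 + b^2*y) ((a*y+b)^2) y := by
    intro y
    have h := (((hasDerivAt_pow 3 y).const_mul (a^2/3)).add
      ((hasDerivAt_pow 2 y).const_mul (a*b))).add ((hasDerivAt_id y).const_mul (b^2))
    exact h.congr_deriv (by push_cast; ring)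
  exact intervalIntegral.integral_eq_sub_of_hasDerivAt (fun y _ => hF y)
    ((by fun_prop : Continuous fun y : ℝ => (a*y+b)^2).intervalIntegrable p q)

lemma affine_sq_lb (a b p q : ℝ) (hpq : p ≤ q) :
    a^2 * (q-p)^3 / 12 ≤ ∫ y in p..q, (a*y+b)^2 := by
  rw [affine_sq_integral]
  nlinarith [mul_nonneg (sub_nonneg.2 hpq) (sq_nonneg (a*(p+q)+2*b)), sq_nonneg (a*(q-p))]

lemma key_interval (p q hmin a b : ℝ) (hpq : p < q) (hhm : 0 < hmin) (hh : hmin ≤ q - p)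
    (Dv v : ℝ → ℝ) (hv : ∀ y ∈ Icc p q, v y = a*y+b)
    (hD : ∀ y ∈ Ioo p q, Dv y = a) :
    IntervalIntegrable (fun y => Dv y ^ 2) volume p q ∧
    IntervalIntegrable (fun y => v y ^ 2) volume p q ∧
    (∫ y in p..q, Dv y ^ 2) ≤ (12/hmin^2) * ∫ y in p..q, v y ^ 2 := by
  have hDae : ∀ᵐ y ∂(volume : Measure ℝ), y ∈ Set.uIoc p q → Dv y ^ 2 = a ^ 2 := by
    have hq : ∀ᵐ y : ℝ, y ≠ q := by rw [ae_iff]; simp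
    filter_upwards [hq] with y hyq hyI
    rw [uIoc_of_le hpq.le] at hyI
    rw [hD y ⟨hyI.1, lt_of_le_of_ne hyI.2 hyq⟩]
  have hVae : ∀ᵐ y ∂(volume : Measure ℝ), y ∈ Set.uIoc p q → v y ^ 2 = (a*y+b) ^ 2 := by
    filter_upwards with y hyI
    rw [uIoc_of_le hpq.le] at hyI
    rw [hv y ⟨hyI.1.le, hyI.2⟩]
  have hiD : IntervalIntegrable (fun y => Dv y ^ 2) volume p q :=
    (_root_.intervalIntegrable_const (c := a^2)).congr_ae
      (((ae_restrict_iff' measurableSet_uIoc).2 (hDae.mono fun y h hy => (h hy).symm)))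
  have hiV : IntervalIntegrable (fun y => v y ^ 2) volume p q :=
    ((by fun_prop : Continuous fun y : ℝ => (a*y+b)^2).intervalIntegrable p q).congr_ae
      (((ae_restrict_iff' measurableSet_uIoc).2 (hVae.mono fun y h hy => (h hy).symm)))
  refine ⟨hiD, hiV, ?_⟩
  have hDval : (∫ y in p..q, Dv y ^ 2) = a^2 * (q - p) := by
    rw [intervalIntegral.integral_congr_ae hDae, intervalIntegral.integral_const, smul_eq_mul]
    ring
  have hVval : a^2 * (q-p)^3 / 12 ≤ ∫ y in p..q, v y ^ 2 := by
    rw [intervalIntegral.integral_congr_ae hVae]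
    exact affine_sq_lb a b p q hpq.le
  rw [hDval]
  rw [div_mul_eq_mul_div, le_div_iff₀ (by positivity)]
  nlinarith [mul_nonneg (mul_nonneg (sq_nonneg a) (sub_pos.2 hpq).le)
      (mul_nonneg (sub_nonneg.2 hh) (by nlinarith : (0:ℝ) ≤ (q - p) + hmin)),
    sq_nonneg a, (sub_pos.2 hpq).le]



/-- Inverse inequality for continuous piecewise affine functions on a one-dimensional
mesh with minimal mesh width `h_min`: `∫ (v')² ≤ (12 / h_min²) ∫ v²`, where `Dv` is the
(a.e.) derivative of `v`. -/
theorem inverse_inequality_piecewise_linear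
    (N : ℕ) (hN : 0 < N) (ℓ : ℝ) (x : Fin (N + 1) → ℝ)
    (hx : StrictMono x) (hx0 : x 0 = 0) (hxN : x (Fin.last N) = ℓ)
    (v : ℝ → ℝ)
    (hv_affine : ∀ k : Fin N, ∃ a b : ℝ,
      ∀ y ∈ Icc (x k.castSucc) (x k.succ), v y = a * y + b)
    (Dv : ℝ → ℝ)
    (hDv : ∀ k : Fin N, ∀ y ∈ Ioo (x k.castSucc) (x k.succ), HasDerivAt v (Dv y) y)
    (hmin : ℝ)
    (hhmin : hmin = Finset.univ.inf' ⟨⟨0, hN⟩, Finset.mem_univ _⟩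
      (fun k : Fin N => x k.succ - x k.castSucc)) :
    (∫ y in (0:ℝ)..ℓ, (Dv y) ^ 2) ≤ (12 / hmin ^ 2) * ∫ y in (0:ℝ)..ℓ, (v y) ^ 2 := by
  have hlt : ∀ k : Fin N, x k.castSucc < x k.succ :=
    fun k => hx Fin.castSucc_lt_succ
  have hmesh : ∀ k : Fin N, hmin ≤ x k.succ - x k.castSucc := by
    intro k; rw [hhmin]; exact Finset.inf'_le _ (Finset.mem_univ k)
  have hmin_pos : 0 < hmin := by
    rw [hhmin]
    exact (Finset.lt_inf'_iff _).2 fun k _ => sub_pos.2 (hlt k)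
  -- derivative identification
  have key : ∀ k : Fin N,
      IntervalIntegrable (fun y => Dv y ^ 2) volume (x k.castSucc) (x k.succ) ∧
      IntervalIntegrable (fun y => v y ^ 2) volume (x k.castSucc) (x k.succ) ∧
      (∫ y in (x k.castSucc)..(x k.succ), Dv y ^ 2) ≤
        (12/hmin^2) * ∫ y in (x k.castSucc)..(x k.succ), v y ^ 2 := by
    intro k
    obtain ⟨a, b, hab⟩ := hv_affine k
    have hD : ∀ y ∈ Ioo (x k.castSucc) (x k.succ), Dv y = a := by
      intro y hy
      have hev : v =ᶠ[nhds y] (fun y => a * y + b) :=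
        Filter.eventuallyEq_of_mem (Ioo_mem_nhds hy.1 hy.2)
          (fun z hz => hab z (Ioo_subset_Icc_self hz))
      have h1 : HasDerivAt (fun y => a * y + b) (Dv y) y :=
        (hDv k y hy).congr_of_eventuallyEq hev.symm
      have h2 : HasDerivAt (fun y : ℝ => a * y + b) a y := by
        simpa using ((hasDerivAt_id y).const_mul a).add_const b
      exact h1.unique h2
    exact key_interval _ _ hmin a b (hlt k) hmin_pos (hmesh k) Dv v hab hD
  -- telescoping sum over the mesh
  set X : ℕ → ℝ := fun i => x ⟨min i N, Nat.lt_succ_of_le (min_le_right _ _)⟩ with hX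
  have hXk : ∀ i (hi : i < N), X i = x (Fin.castSucc ⟨i, hi⟩) ∧ X (i+1) = x (Fin.succ ⟨i, hi⟩) := by
    intro i hi
    constructor
    · simp only [hX]; congr 1; exact Fin.ext (by simp [Nat.min_eq_left hi.le])
    · simp only [hX]; congr 1; exact Fin.ext (by simp [Nat.min_eq_left hi])
  have hX0 : X 0 = 0 := by
    rw [hX]; simpa using hx0
  have hXN : X N = ℓ := by
    have h : (⟨min N N, Nat.lt_succ_of_le (min_le_right _ _)⟩ : Fin (N+1)) = Fin.last N :=
      Fin.ext (by simp)
    show x ⟨min N N, Nat.lt_succ_of_le (min_le_right _ _)⟩ = ℓ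
    rw [h, hxN]
  have hsumD : ∑ i ∈ Finset.range N, ∫ y in (X i)..(X (i+1)), Dv y ^ 2
      = ∫ y in (0:ℝ)..ℓ, Dv y ^ 2 := by
    rw [← hX0, ← hXN]
    exact intervalIntegral.sum_integral_adjacent_intervals fun i hi => by
      rw [(hXk i hi).1, (hXk i hi).2]; exact (key ⟨i, hi⟩).1
  have hsumV : ∑ i ∈ Finset.range N, ∫ y in (X i)..(X (i+1)), v y ^ 2
      = ∫ y in (0:ℝ)..ℓ, v y ^ 2 := by
    rw [← hX0, ← hXN]
    exact intervalIntegral.sum_integral_adjacent_intervals fun i hi => by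
      rw [(hXk i hi).1, (hXk i hi).2]; exact (key ⟨i, hi⟩).2.1
  rw [← hsumD, ← hsumV, Finset.mul_sum]
  apply Finset.sum_le_sum
  intro i hi
  have hi' := Finset.mem_range.1 hi
  rw [(hXk i hi').1, (hXk i hi').2]
  exact (key ⟨i, hi'⟩).2.2
end
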